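/- For every natural number n, the number ℓ(GF_n) of covering pairs in the Grand Fibonacci poset GF_n satisfies, as integers, 27·ℓ(GF_n) = (3n−1)·2^{n+1} + 2·(3n+1)·(−1)^n. -/

import Mathlib

/-- Steps of a path: up `U = (1,1)`, down `D = (1,-1)` and horizontal `H = (1,0)`. -/
inductive Step : Type
  | U : Step
  | D : Step
  | H : Step
  deriving DecidableEq

/-- The height of a path: number of up steps minus number of down steps. -/
def height (w : List Step) : ℤ := (w.count Step.U : ℤ) - (w.count Step.D : ℤ)

/-- The order on paths: pointwise comparison of the heights after each number of steps. -/
def PathLe (w w' : List Step) : Prop :=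
  ∀ i : ℕ, height (w.take i) ≤ height (w'.take i)

/-- Strict order on paths. -/
def PathLt (w w' : List Step) : Prop := PathLe w w' ∧ ¬ PathLe w' w

/-- `Covers P w w'` : within the class of paths satisfying `P`, the path `w'` covers `w`,
i.e. `w < w'` and no path of the class lies strictly between them. -/
def Covers (P : List Step → Prop) (w w' : List Step) : Prop :=
  P w ∧ P w' ∧ PathLt w w' ∧ ∀ z : List Step, P z → ¬ (PathLt w z ∧ PathLt z w')

/-- A Grand Fibonacci path of length `n`: a word of length `n` with equally many up and
down steps, whose prefix heights all lie in `{-1,0,1}` and whose horizontal steps all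
occur at height `0`. -/
def IsGrandFibonacci (n : ℕ) (w : List Step) : Prop :=
  w.length = n ∧ w.count Step.U = w.count Step.D ∧
    (∀ i : ℕ, -1 ≤ height (w.take i) ∧ height (w.take i) ≤ 1) ∧
    (∀ i : ℕ, w[i]? = some Step.H → height (w.take i) = 0)

/-- The number of edges of the Hasse diagram of the Grand Fibonacci poset `GF_n`,
i.e. the number of covering pairs of Grand Fibonacci paths of length `n`. -/
noncomputable def grandFibonacciEdges (n : ℕ) : ℕ :=
  Nat.card {p : List Step × List Step // Covers (IsGrandFibonacci n) p.1 p.2}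

/-!
In a covering pair of `GF_n` the two paths differ in a single height: the lower path has a
factor `DU` or `HH` starting at height `0`, and the upper path replaces it by `HH` resp. `UD`.
Indeed, take a position where the lower path is strictly below the upper one and as low as
possible; there the lower path has a valley, the constraints of `GF_n` force that valley to be
such a factor, and raising it gives a path weakly between the two, hence the upper one.

Cutting at this factor, the covering pairs of `GF_{m+2}` correspond to triples of a path of
`GF_p`, one of the two factors and a path of `GF_q`, with `p + q = m`. Splitting off the first
block `H`, `UD` or `DU` gives `|GF_{k+2}| = |GF_{k+1}| + 2 |GF_k|`, so
`3 |GF_k| = 2^{k+1} + (-1)^k`, and the convolution of these closed forms is the formula.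
-/
open Finset

def Step.value : Step → ℤ
  | .U => 1
  | .D => -1
  | .H => 0

lemma Step.value_injective : Function.Injective Step.value := by
  intro s t h
  cases s <;> cases t <;> simp_all [Step.value]

instance : Fintype Step := ⟨{.U, .D, .H}, fun s => by cases s <;> simp⟩

lemma height_singleton (s : Step) : height [s] = s.value := by
  cases s <;> simp [height, Step.value]

lemma height_append (u v : List Step) : height (u ++ v) = height u + height v := by
  simp only [height, List.count_append]
  push_cast
  ring

def heightAt (w : List Step) (i : ℕ) : ℤ := height (w.take i)

lemma pathLe_iff {w w' : List Step} : PathLe w w' ↔ ∀ i, heightAt w i ≤ heightAt w' i := Iff.rfl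

lemma heightAt_zero (w : List Step) : heightAt w 0 = 0 := by
  simp [heightAt, height]

lemma heightAt_of_length_le {w : List Step} {i : ℕ} (h : w.length ≤ i) :
    heightAt w i = height w := by
  rw [heightAt, List.take_of_length_le h]

lemma heightAt_take (w : List Step) (k j : ℕ) : heightAt (w.take k) j = heightAt w (min j k) := by
  rw [heightAt, List.take_take]
  rfl

lemma heightAt_append (u v : List Step) (j : ℕ) :
    heightAt (u ++ v) j = heightAt u j + heightAt v (j - u.length) := by
  rw [heightAt, List.take_append, height_append]
  rfl

lemma height_drop (w : List Step) (k : ℕ) : height (w.drop k) = height w - heightAt w k := by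
  rw [heightAt, eq_sub_iff_add_eq', ← height_append, List.take_append_drop]

lemma heightAt_drop (w : List Step) (k j : ℕ) :
    heightAt (w.drop k) j = heightAt w (k + j) - heightAt w k := by
  rw [heightAt, List.take_drop, height_drop, heightAt_take, min_eq_left (by omega)]
  rfl

lemma heightAt_succ (w : List Step) (i : ℕ) :
    heightAt w (i + 1) = heightAt w i + height w[i]?.toList := by
  rw [heightAt, List.take_add_one, height_append]
  rfl

lemma heightAt_succ_of_getElem? {w : List Step} {i : ℕ} {s : Step} (h : w[i]? = some s) :
    heightAt w (i + 1) = heightAt w i + s.value := by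
  rw [heightAt_succ, h, Option.toList_some, height_singleton]

lemma abs_heightAt_succ_sub_le (w : List Step) (i : ℕ) :
    |heightAt w (i + 1) - heightAt w i| ≤ 1 := by
  rw [heightAt_succ, add_sub_cancel_left]
  rcases w[i]? with _ | s
  · simp [height]
  · rw [Option.toList_some, height_singleton]
    cases s <;> simp [Step.value]

lemma PathLe.antisymm {w w' : List Step} (h : PathLe w w') (h' : PathLe w' w)
    (hlen : w.length = w'.length) : w = w' := by
  have heq (i : ℕ) : heightAt w i = heightAt w' i := le_antisymm (h i) (h' i)
  refine List.ext_getElem? fun i => ?_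
  rcases lt_or_ge i w.length with hi | hi
  · rw [List.getElem?_eq_getElem hi, List.getElem?_eq_getElem (hlen ▸ hi)]
    have e := heightAt_succ_of_getElem? (List.getElem?_eq_getElem hi)
    have e' := heightAt_succ_of_getElem? (List.getElem?_eq_getElem (hlen ▸ hi))
    rw [heq, heq] at e
    exact congrArg some (Step.value_injective (by omega))
  · rw [List.getElem?_eq_none hi, List.getElem?_eq_none (hlen ▸ hi)]

lemma isGrandFibonacci_iff {n : ℕ} {w : List Step} :
    IsGrandFibonacci n w ↔ w.length = n ∧ height w = 0 ∧
      (∀ i, -1 ≤ heightAt w i ∧ heightAt w i ≤ 1) ∧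
      ∀ i, w[i]? = some .H → heightAt w i = 0 := by
  simp only [IsGrandFibonacci, height, sub_eq_zero, Nat.cast_inj, heightAt]

namespace IsGrandFibonacci

variable {n p q k : ℕ} {u v w : List Step}

lemma length_eq (h : IsGrandFibonacci n w) : w.length = n := h.1

lemma height_eq_zero (h : IsGrandFibonacci n w) : height w = 0 := (isGrandFibonacci_iff.1 h).2.1

lemma heightAt_mem_Icc (h : IsGrandFibonacci n w) (i : ℕ) : heightAt w i ∈ Set.Icc (-1) 1 :=
  h.2.2.1 i

lemma neg_one_le_heightAt (h : IsGrandFibonacci n w) (i : ℕ) : -1 ≤ heightAt w i :=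
  (h.heightAt_mem_Icc i).1

lemma heightAt_le_one (h : IsGrandFibonacci n w) (i : ℕ) : heightAt w i ≤ 1 :=
  (h.heightAt_mem_Icc i).2

lemma heightAt_eq_zero_of_getElem?_eq_H (h : IsGrandFibonacci n w) {i : ℕ}
    (hi : w[i]? = some .H) : heightAt w i = 0 :=
  h.2.2.2 i hi

lemma heightAt_of_le (h : IsGrandFibonacci n w) {i : ℕ} (hi : n ≤ i) : heightAt w i = 0 := by
  rw [heightAt_of_length_le (h.length_eq ▸ hi), h.height_eq_zero]

lemma heightAt_eq_zero_of_succ_eq (h : IsGrandFibonacci n w) {i : ℕ} (hi : i < n)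
    (hflat : heightAt w (i + 1) = heightAt w i) : heightAt w i = 0 := by
  have hi' : i < w.length := h.length_eq ▸ hi
  have hH : w[i] = .H := Step.value_injective <| by
    have := heightAt_succ_of_getElem? (List.getElem?_eq_getElem hi')
    rw [Step.value]
    omega
  exact h.heightAt_eq_zero_of_getElem?_eq_H (hH ▸ List.getElem?_eq_getElem hi')

lemma append (hu : IsGrandFibonacci p u) (hv : IsGrandFibonacci q v) :
    IsGrandFibonacci (p + q) (u ++ v) := by
  have key (j : ℕ) : heightAt (u ++ v) j = heightAt u j + heightAt v (j - p) := by
    rw [heightAt_append, hu.length_eq]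
  refine isGrandFibonacci_iff.2
    ⟨by simp [hu.length_eq, hv.length_eq], ?_, fun i => ?_, fun i hi => ?_⟩
  · rw [height_append, hu.height_eq_zero, hv.height_eq_zero, add_zero]
  · rcases le_or_gt i p with hip | hip
    · rw [key, Nat.sub_eq_zero_of_le hip, heightAt_zero, add_zero]
      exact hu.heightAt_mem_Icc i
    · rw [key, hu.heightAt_of_le hip.le, zero_add]
      exact hv.heightAt_mem_Icc _
  · rw [key]
    rcases lt_or_ge i p with hip | hip
    · rw [List.getElem?_append_left (hu.length_eq ▸ hip)] at hi
      rw [hu.heightAt_eq_zero_of_getElem?_eq_H hi, Nat.sub_eq_zero_of_le hip.le, heightAt_zero,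
        add_zero]
    · rw [List.getElem?_append_right (hu.length_eq ▸ hip), hu.length_eq] at hi
      rw [hu.heightAt_of_le hip, hv.heightAt_eq_zero_of_getElem?_eq_H hi, add_zero]

lemma take (h : IsGrandFibonacci n w) (hk : k ≤ n) (h0 : heightAt w k = 0) :
    IsGrandFibonacci k (w.take k) := by
  refine isGrandFibonacci_iff.2 ⟨by simp [h.length_eq, hk], h0, fun i => ?_, fun i hi => ?_⟩
  · rw [heightAt_take]
    exact h.heightAt_mem_Icc _
  · have hik : i < k := by
      by_contra! hki
      simp [hki.not_gt] at hi
    rw [List.getElem?_take_of_lt hik] at hi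
    rw [heightAt_take, min_eq_left hik.le]
    exact h.heightAt_eq_zero_of_getElem?_eq_H hi

lemma drop (h : IsGrandFibonacci n w) (h0 : heightAt w k = 0) :
    IsGrandFibonacci (n - k) (w.drop k) := by
  refine isGrandFibonacci_iff.2 ⟨by simp [h.length_eq], ?_, fun i => ?_, fun i hi => ?_⟩
  · rw [height_drop, h.height_eq_zero, h0, sub_zero]
  · rw [heightAt_drop, h0, sub_zero]
    exact h.heightAt_mem_Icc _
  · rw [List.getElem?_drop] at hi
    rw [heightAt_drop, h0, h.heightAt_eq_zero_of_getElem?_eq_H hi, sub_zero]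

end IsGrandFibonacci

lemma isGrandFibonacci_H : IsGrandFibonacci 1 [.H] := by
  refine ⟨rfl, rfl, fun i => ?_, fun i hi => ?_⟩ <;> rcases i with _ | i <;> simp_all [height]

lemma isGrandFibonacci_UD : IsGrandFibonacci 2 [.U, .D] := by
  refine ⟨rfl, rfl, fun i => ?_, fun i hi => ?_⟩ <;> rcases i with _ | _ | i <;> simp_all [height]

lemma isGrandFibonacci_DU : IsGrandFibonacci 2 [.D, .U] := by
  refine ⟨rfl, rfl, fun i => ?_, fun i hi => ?_⟩ <;> rcases i with _ | _ | i <;> simp_all [height]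

lemma isGrandFibonacci_HH : IsGrandFibonacci 2 [.H, .H] := by
  refine ⟨rfl, rfl, fun i => ?_, fun i hi => ?_⟩ <;> rcases i with _ | _ | i <;> simp_all [height]

def lowerBlock : Bool → List Step
  | true => [.D, .U]
  | false => [.H, .H]

def upperBlock : Bool → List Step
  | true => [.H, .H]
  | false => [.U, .D]

lemma isGrandFibonacci_lowerBlock (b : Bool) : IsGrandFibonacci 2 (lowerBlock b) := by
  cases b
  exacts [isGrandFibonacci_HH, isGrandFibonacci_DU]

lemma isGrandFibonacci_upperBlock (b : Bool) : IsGrandFibonacci 2 (upperBlock b) := by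
  cases b
  exacts [isGrandFibonacci_UD, isGrandFibonacci_HH]

lemma lowerBlock_injective : Function.Injective lowerBlock := by
  intro b b' h
  cases b <;> cases b' <;> simp_all [lowerBlock]

lemma heightAt_upperBlock (b : Bool) (j : ℕ) :
    heightAt (upperBlock b) j = heightAt (lowerBlock b) j + if j = 1 then 1 else 0 := by
  rcases j with _ | _ | j <;> cases b <;> simp [heightAt, height, lowerBlock, upperBlock]

lemma heightAt_raise (u v : List Step) (b : Bool) (j : ℕ) :
    heightAt (u ++ upperBlock b ++ v) j =
      heightAt (u ++ lowerBlock b ++ v) j + if j = u.length + 1 then 1 else 0 := by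
  have hlen (b : Bool) : (lowerBlock b).length = 2 ∧ (upperBlock b).length = 2 := by
    cases b <;> exact ⟨rfl, rfl⟩
  have hj : j - u.length = 1 ↔ j = u.length + 1 := by omega
  simp only [List.append_assoc, heightAt_append, (hlen b).1, (hlen b).2,
    heightAt_upperBlock, hj]
  ring

lemma covers_of_heightAt_eq {P : List Step → Prop} {w w' : List Step} (hw : P w) (hw' : P w')
    (k : ℕ) (h : ∀ j, heightAt w' j = heightAt w j + if j = k then 1 else 0) :
    Covers P w w' := by
  have hle : PathLe w w' := fun j => by
    have := h j
    split_ifs at this <;> exact (by omega : heightAt w j ≤ heightAt w' j)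
  refine ⟨hw, hw', ⟨hle, fun hle' => ?_⟩, fun z _ ⟨⟨hwz, hzw⟩, hzw', hw'z⟩ => hw'z ?_⟩
  · have := h k
    rw [if_pos rfl] at this
    exact absurd (pathLe_iff.1 hle' k) (by omega)
  · -- `z` exceeds `w` somewhere, which can only happen at `k`, where `z` then reaches `w'`
    rw [pathLe_iff] at hwz hzw hzw' ⊢
    simp only [not_forall, not_le] at hzw
    obtain ⟨i, hi⟩ := hzw
    have hik : i = k := by
      by_contra hik
      have := h i
      rw [if_neg hik] at this
      exact absurd (hzw' i) (by omega)
    subst hik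
    intro j
    rcases eq_or_ne j i with rfl | hj
    · have := h j
      rw [if_pos rfl] at this
      omega
    · rw [h j, if_neg hj, add_zero]
      exact hwz j

lemma covers_raise {p q : ℕ} {u v : List Step} (hu : IsGrandFibonacci p u)
    (hv : IsGrandFibonacci q v) (b : Bool) :
    Covers (IsGrandFibonacci (p + q + 2)) (u ++ lowerBlock b ++ v) (u ++ upperBlock b ++ v) := by
  rw [show p + q + 2 = p + 2 + q by omega]
  exact covers_of_heightAt_eq ((hu.append (isGrandFibonacci_lowerBlock b)).append hv)
    ((hu.append (isGrandFibonacci_upperBlock b)).append hv) _ (heightAt_raise u v b)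

lemma exists_valley {n : ℕ} {w w' : List Step} (hw : IsGrandFibonacci n w)
    (hw' : IsGrandFibonacci n w') (h : ¬ PathLe w' w) :
    ∃ p, p + 2 ≤ n ∧ heightAt w (p + 1) < heightAt w' (p + 1) ∧
      heightAt w (p + 1) ≤ heightAt w p ∧ heightAt w (p + 1) ≤ heightAt w (p + 2) := by
  have hlt_n (j : ℕ) (hj : heightAt w j < heightAt w' j) : j < n := by
    by_contra! hjn
    rw [hw.heightAt_of_le hjn, hw'.heightAt_of_le hjn] at hj
    exact hj.false
  set S := (range n).filter fun j => heightAt w j < heightAt w' j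
  have hS (j : ℕ) (hj : heightAt w j < heightAt w' j) : j ∈ S :=
    mem_filter.2 ⟨mem_range.2 (hlt_n j hj), hj⟩
  -- a position where `w < w'` with `w` as low as possible is a valley of `w`
  obtain ⟨i, hiS, hmin⟩ := S.exists_min_image (heightAt w) <| by
    obtain ⟨j, hj⟩ : ∃ j, heightAt w j < heightAt w' j := by
      simpa [pathLe_iff] using h
    exact ⟨j, hS j hj⟩
  obtain ⟨hin, hi⟩ := mem_filter.1 hiS
  obtain _ | p := i
  · simp [heightAt_zero] at hi
  have step (j : ℕ) := abs_le.1 (abs_heightAt_succ_sub_le w' j)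
  refine ⟨p, by simp at hin; omega, hi, ?_, ?_⟩
  · by_contra! hc
    have := step p
    have := hmin p (hS p (by omega))
    omega
  · by_contra! hc
    have := step (p + 1)
    rw [show p + 1 + 1 = p + 2 from rfl] at this
    have := hmin (p + 2) (hS (p + 2) (by omega))
    omega

lemma heightAt_eq_zero_of_valley {n p : ℕ} {w w' : List Step} (hw : IsGrandFibonacci n w)
    (hw' : IsGrandFibonacci n w') (hle : PathLe w w') (hp : p + 2 ≤ n)
    (hlt : heightAt w (p + 1) < heightAt w' (p + 1))
    (hl : heightAt w (p + 1) ≤ heightAt w p) (hr : heightAt w (p + 1) ≤ heightAt w (p + 2)) :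
    heightAt w p = 0 ∧ heightAt w (p + 1) ≤ 0 ∧ heightAt w (p + 2) = 0 := by
  -- a neighbour of the valley at the same height would be a flat step of `w` off height `0`;
  -- one at height `1` would force a flat step of `w'` at height `1`
  have := hw.heightAt_eq_zero_of_succ_eq (i := p) (by omega)
  have := hw.heightAt_eq_zero_of_succ_eq (i := p + 1) (by omega)
  have := hw'.heightAt_eq_zero_of_succ_eq (i := p) (by omega)
  have := hw'.heightAt_eq_zero_of_succ_eq (i := p + 1) (by omega)
  have := abs_le.1 (abs_heightAt_succ_sub_le w p)
  have := abs_le.1 (abs_heightAt_succ_sub_le w (p + 1))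
  have := pathLe_iff.1 hle p
  have := pathLe_iff.1 hle (p + 2)
  have := hw.neg_one_le_heightAt (p + 1)
  have := hw'.heightAt_le_one p
  have := hw'.heightAt_le_one (p + 1)
  have := hw'.heightAt_le_one (p + 2)
  simp only [show p + 1 + 1 = p + 2 from rfl] at *
  omega

lemma exists_eq_lowerBlock {p : ℕ} {w : List Step} (hp : p + 2 ≤ w.length)
    (h02 : heightAt w (p + 2) = heightAt w p) (h1 : heightAt w (p + 1) ≤ heightAt w p) :
    ∃ b, w = w.take p ++ lowerBlock b ++ w.drop (p + 2) := by
  have hs := List.getElem?_eq_getElem (show p < w.length by omega)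
  have ht := List.getElem?_eq_getElem (show p + 1 < w.length by omega)
  have hw : w = w.take p ++ [w[p], w[p + 1]] ++ w.drop (p + 2) := by
    conv_lhs => rw [← List.take_append_drop (p + 2) w]
    rw [List.take_add_one, List.take_add_one, hs, ht]
    simp
  have e1 := heightAt_succ_of_getElem? hs
  have e2 : heightAt w (p + 2) = _ := heightAt_succ_of_getElem? ht
  generalize w[p] = s, w[p + 1] = t at hw e1 e2
  cases s <;> cases t <;> simp only [Step.value] at e1 e2 <;>
    first | exact ⟨true, hw⟩ | exact ⟨false, hw⟩ | omega

lemma Covers.exists_raise {n : ℕ} {w w' : List Step} (h : Covers (IsGrandFibonacci n) w w') :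
    ∃ p q b u v, p + q + 2 = n ∧ IsGrandFibonacci p u ∧ IsGrandFibonacci q v ∧
      w = u ++ lowerBlock b ++ v ∧ w' = u ++ upperBlock b ++ v := by
  obtain ⟨hw, hw', ⟨hle, hnle⟩, hmin⟩ := h
  obtain ⟨p, hpn, hlt, hl, hr⟩ := exists_valley hw hw' hnle
  obtain ⟨h0, h1, h2⟩ := heightAt_eq_zero_of_valley hw hw' hle hpn hlt hl hr
  obtain ⟨b, hb⟩ := exists_eq_lowerBlock (hw.length_eq ▸ hpn) (h2.trans h0.symm) (h0 ▸ h1)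
  have hu := hw.take (by omega) h0
  have hv := hw.drop h2
  refine ⟨p, n - (p + 2), b, _, _, by omega, hu, hv, hb, ?_⟩
  -- the raised path lies weakly below `w'`, so minimality of the cover forces equality
  have hraise := covers_raise hu hv b
  rw [← hb, show p + (n - (p + 2)) + 2 = n by omega] at hraise
  have hle' : PathLe (w.take p ++ upperBlock b ++ w.drop (p + 2)) w' := fun j => by
    rw [← heightAt, ← heightAt, heightAt_raise, ← hb, hu.length_eq]
    split_ifs with hj
    · subst hj
      omega
    · exact (add_zero _).trans_le (hle j)
  have hge : PathLe w' (w.take p ++ upperBlock b ++ w.drop (p + 2)) := by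
    by_contra hc
    exact hmin _ hraise.2.1 ⟨hraise.2.2.1, hle', hc⟩
  exact hge.antisymm hle' (by rw [hw'.length_eq, hraise.2.1.length_eq])

instance (n : ℕ) : Finite {w : List Step // IsGrandFibonacci n w} :=
  Set.Finite.to_subtype (s := {w | IsGrandFibonacci n w})
    ((List.finite_length_eq Step n).subset fun _ hw => hw.length_eq)

noncomputable def grandFibonacciCount (n : ℕ) : ℕ :=
  Nat.card {w : List Step // IsGrandFibonacci n w}

lemma grandFibonacciEdges_eq_zero_of_lt_two {n : ℕ} (hn : n < 2) : grandFibonacciEdges n = 0 := by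
  refine Nat.card_eq_zero.2 (Or.inl ⟨fun ⟨_, hc⟩ => ?_⟩)
  obtain ⟨p, q, -, -, -, hpq, -⟩ := hc.exists_raise
  omega

def raiseCover (m : ℕ) :
    (Σ pq : antidiagonal m,
      {u // IsGrandFibonacci pq.1.1 u} × Bool × {v // IsGrandFibonacci pq.1.2 v}) →
      {c : List Step × List Step // Covers (IsGrandFibonacci (m + 2)) c.1 c.2}
  | ⟨⟨(p, q), hpq⟩, ⟨u, hu⟩, b, ⟨v, hv⟩⟩ => ⟨(u ++ lowerBlock b ++ v, u ++ upperBlock b ++ v), by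
      rw [← HasAntidiagonal.mem_antidiagonal.1 hpq]
      exact covers_raise hu hv b⟩

lemma raiseCover_injective (m : ℕ) : Function.Injective (raiseCover m) := by
  rintro ⟨⟨⟨p, q⟩, hpq⟩, ⟨u, hu⟩, b, ⟨v, hv⟩⟩ ⟨⟨⟨p', q'⟩, hpq'⟩, ⟨u', hu'⟩, b', ⟨v', hv'⟩⟩ h
  simp only [raiseCover, Subtype.mk.injEq, Prod.mk.injEq] at h
  obtain ⟨hlow, hup⟩ := h
  -- the raised position `|u| + 1` is read off from the pair
  have hlen : u.length = u'.length := by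
    have := congrArg (heightAt · (u.length + 1)) hup
    simp only [heightAt_raise, hlow] at this
    split_ifs at this with h <;> omega
  rw [List.append_assoc, List.append_assoc] at hlow
  obtain ⟨rfl, hrest⟩ := List.append_inj hlow hlen
  obtain ⟨hb, rfl⟩ := List.append_inj hrest (by cases b <;> cases b' <;> rfl)
  obtain rfl := lowerBlock_injective hb
  obtain rfl : p = p' := hu.length_eq.symm.trans hu'.length_eq
  obtain rfl : q = q' := by simp only [HasAntidiagonal.mem_antidiagonal] at hpq hpq'; omega
  rfl

lemma raiseCover_surjective (m : ℕ) : Function.Surjective (raiseCover m) := by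
  rintro ⟨⟨w, w'⟩, hc⟩
  obtain ⟨p, q, b, u, v, hpq, hu, hv, rfl, rfl⟩ := hc.exists_raise
  exact ⟨⟨⟨(p, q), HasAntidiagonal.mem_antidiagonal.2 (by omega)⟩, ⟨u, hu⟩, b, ⟨v, hv⟩⟩, rfl⟩

lemma grandFibonacciEdges_add_two (m : ℕ) :
    grandFibonacciEdges (m + 2) =
      ∑ pq ∈ antidiagonal m, 2 * (grandFibonacciCount pq.1 * grandFibonacciCount pq.2) := by
  rw [grandFibonacciEdges, ← Nat.card_congr (Equiv.ofBijective _
    ⟨raiseCover_injective m, raiseCover_surjective m⟩), Nat.card_sigma,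
    ← sum_coe_sort (antidiagonal m)]
  refine sum_congr rfl fun pq _ => ?_
  simp only [Nat.card_prod, Nat.card_eq_fintype_card (α := Bool), Fintype.card_bool,
    grandFibonacciCount]
  ring

def consFirstBlock (n : ℕ) :
    {u // IsGrandFibonacci (n + 1) u} ⊕
        {v // IsGrandFibonacci n v} ⊕ {v // IsGrandFibonacci n v} →
      {w // IsGrandFibonacci (n + 2) w}
  | .inl u => ⟨.H :: u, by
      have := isGrandFibonacci_H.append u.2; rwa [show 1 + (n + 1) = n + 2 by omega] at this⟩
  | .inr (.inl v) => ⟨.U :: .D :: v, by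
      have := isGrandFibonacci_UD.append v.2; rwa [add_comm] at this⟩
  | .inr (.inr v) => ⟨.D :: .U :: v, by
      have := isGrandFibonacci_DU.append v.2; rwa [add_comm] at this⟩

lemma consFirstBlock_injective (n : ℕ) : Function.Injective (consFirstBlock n) := by
  rintro (u | v | v) (u' | v' | v') h <;>
    simp_all [consFirstBlock, Subtype.ext_iff]

lemma consFirstBlock_surjective (n : ℕ) : Function.Surjective (consFirstBlock n) := by
  rintro ⟨w, hw⟩
  obtain ⟨a, b, v, rfl⟩ : ∃ a b v, w = a :: b :: v := by
    match w, hw.length_eq with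
    | a :: b :: v, _ => exact ⟨a, b, v, rfl⟩
  have hv (h : heightAt (a :: b :: v) 2 = 0) : IsGrandFibonacci n v := by
    simpa using hw.drop h
  cases a with
  | H =>
    exact ⟨.inl ⟨b :: v, by simpa using hw.drop (k := 1) (by simp [heightAt, height])⟩, rfl⟩
  | U =>
    cases b
    · exact absurd (hw.heightAt_le_one 2) (by simp [heightAt, height])
    · exact ⟨.inr (.inl ⟨v, hv (by simp [heightAt, height])⟩), rfl⟩
    · exact absurd (hw.heightAt_eq_zero_of_getElem?_eq_H (i := 1) rfl)
        (by simp [heightAt, height])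
  | D =>
    cases b
    · exact ⟨.inr (.inr ⟨v, hv (by simp [heightAt, height])⟩), rfl⟩
    · exact absurd (hw.neg_one_le_heightAt 2) (by simp [heightAt, height])
    · exact absurd (hw.heightAt_eq_zero_of_getElem?_eq_H (i := 1) rfl)
        (by simp [heightAt, height])

lemma grandFibonacciCount_add_two (n : ℕ) :
    grandFibonacciCount (n + 2) = grandFibonacciCount (n + 1) + 2 * grandFibonacciCount n := by
  rw [grandFibonacciCount, ← Nat.card_congr (Equiv.ofBijective _
    ⟨consFirstBlock_injective n, consFirstBlock_surjective n⟩), Nat.card_sum, Nat.card_sum,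
    grandFibonacciCount, grandFibonacciCount]
  ring

lemma grandFibonacciCount_zero : grandFibonacciCount 0 = 1 :=
  Nat.card_eq_one_iff_exists.2 ⟨⟨[], ⟨rfl, rfl, by simp [height], by simp⟩⟩,
    fun ⟨w, hw⟩ => Subtype.ext (List.eq_nil_of_length_eq_zero hw.length_eq)⟩

lemma grandFibonacciCount_one : grandFibonacciCount 1 = 1 := by
  refine Nat.card_eq_one_iff_exists.2 ⟨⟨[.H], isGrandFibonacci_H⟩, fun ⟨w, hw⟩ => ?_⟩
  obtain ⟨s, rfl⟩ := List.length_eq_one_iff.1 hw.length_eq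
  have := hw.height_eq_zero
  cases s <;> simp_all [height]

lemma three_mul_grandFibonacciCount (k : ℕ) :
    3 * (grandFibonacciCount k : ℤ) = 2 ^ (k + 1) + (-1) ^ k := by
  induction k using Nat.twoStepInduction with
  | zero => simp [grandFibonacciCount_zero]
  | one => simp [grandFibonacciCount_one]
  | more k ih ih' =>
    rw [grandFibonacciCount_add_two]
    push_cast
    linear_combination ih' + 2 * ih

lemma three_mul_sum_antidiagonal_two_pow_mul_neg_one_pow (m : ℕ) :
    3 * ∑ x ∈ antidiagonal m, (2 : ℤ) ^ x.1 * (-1) ^ x.2 = 2 ^ (m + 1) + (-1) ^ m := by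
  induction m with
  | zero => simp
  | succ m ih =>
    have hshift : ∑ x ∈ antidiagonal m, (2 : ℤ) ^ (x.1 + 1) * (-1) ^ x.2 =
        2 * ∑ x ∈ antidiagonal m, (2 : ℤ) ^ x.1 * (-1) ^ x.2 := by
      rw [mul_sum]
      exact sum_congr rfl fun _ _ => by ring
    rw [Nat.sum_antidiagonal_succ, hshift]
    linear_combination 2 * ih

lemma three_mul_sum_antidiagonal_mul (m : ℕ) :
    3 * ∑ x ∈ antidiagonal m, ((2 : ℤ) ^ (x.1 + 1) + (-1) ^ x.1) * (2 ^ (x.2 + 1) + (-1) ^ x.2) =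
      (3 * m + 5) * 2 ^ (m + 2) + (3 * m + 7) * (-1) ^ m := by
  have hterm : ∀ x ∈ antidiagonal m,
      ((2 : ℤ) ^ (x.1 + 1) + (-1) ^ x.1) * (2 ^ (x.2 + 1) + (-1) ^ x.2) =
        (4 * 2 ^ m + (-1) ^ m) + 2 * (2 ^ x.1 * (-1) ^ x.2) +
          2 * (2 ^ x.swap.1 * (-1) ^ x.swap.2) := by
    intro x hx
    rw [HasAntidiagonal.mem_antidiagonal] at hx
    rw [← hx, pow_add, pow_add]
    simp only [Prod.fst_swap, Prod.snd_swap]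
    ring
  rw [sum_congr rfl hterm, sum_add_distrib, sum_add_distrib, ← mul_sum, ← mul_sum,
    Nat.sum_antidiagonal_swap (f := fun x => (2 : ℤ) ^ x.1 * (-1) ^ x.2), sum_const,
    Nat.card_antidiagonal, nsmul_eq_mul]
  push_cast
  linear_combination 4 * three_mul_sum_antidiagonal_two_pow_mul_neg_one_pow m

/-- The number of edges of the Hasse diagram of the Grand Fibonacci poset `GF_n`
satisfies `27·ℓ(GF_n) = (3n-1)·2^{n+1} + 2·(3n+1)·(-1)^n` (as integers). -/
theorem grandFibonacciEdges_eq (n : ℕ) :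
    27 * (grandFibonacciEdges n : ℤ) =
      (3 * n - 1) * 2 ^ (n + 1) + 2 * (3 * n + 1) * (-1) ^ n := by
  obtain _ | _ | m := n
  · simp [grandFibonacciEdges_eq_zero_of_lt_two]
  · simp [grandFibonacciEdges_eq_zero_of_lt_two]
  · calc 27 * (grandFibonacciEdges (m + 2) : ℤ)
        = 6 * ∑ x ∈ antidiagonal m,
            (3 * (grandFibonacciCount x.1 : ℤ)) * (3 * grandFibonacciCount x.2) := by
          rw [grandFibonacciEdges_add_two, mul_sum]
          push_cast
          rw [mul_sum]
          exact sum_congr rfl fun x _ => by ring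
      _ = _ := by
          simp only [three_mul_grandFibonacciCount]
          push_cast
          linear_combination 2 * three_mul_sum_antidiagonal_mul m
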